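/- Let Q be an inverse quantal frame and X a Q-bisheaf. Then the set 𝔅_X of local bisections of X is a Hilbert basis with respect to both sheaf structures: for all x ∈ X, x = ⋁_{s∈𝔅_X}⟨x,s⟩s and x = ⋁_{s∈𝔅_X} (s ∧ 1_Q·(s ∧ x)). -/

import Mathlib

/-- A unital involutive quantale: a complete lattice with an associative
multiplication preserving arbitrary joins in each variable, a unit `e`, and a
join-preserving involution. -/
structure Quantale' (Q : Type*) [CompleteLattice Q] where
  mul : Q → Q → Q
  e : Q
  star : Q → Q
  mul_assoc : ∀ a b c, mul (mul a b) c = mul a (mul b c)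
  sSup_mul : ∀ (S : Set Q) (b : Q), mul (sSup S) b = ⨆ a ∈ S, mul a b
  mul_sSup : ∀ (a : Q) (S : Set Q), mul a (sSup S) = ⨆ b ∈ S, mul a b
  e_mul : ∀ a, mul e a = a
  mul_e : ∀ a, mul a e = a
  star_star : ∀ a, star (star a) = a
  star_mul : ∀ a b, star (mul a b) = mul (star b) (star a)
  star_sSup : ∀ S : Set Q, star (sSup S) = ⨆ a ∈ S, star a

/-- The set of partial units of a quantale. -/
def Quantale'.PU {Q : Type*} [CompleteLattice Q] (Qs : Quantale' Q) : Set Q :=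
  {s | Qs.mul s (Qs.star s) ≤ Qs.e ∧ Qs.mul (Qs.star s) s ≤ Qs.e}

/-- An inverse quantal frame: a unital involutive quantale which is a frame,
has a stable support, and whose partial units join to the top. -/
structure InverseQuantalFrame (Q : Type*) [Order.Frame Q] extends toQuantale : Quantale' Q where
  supp : Q → Q
  supp_le_e : ∀ a, supp a ≤ e
  supp_sSup : ∀ S : Set Q, supp (sSup S) = ⨆ a ∈ S, supp a
  supp_le_mul_star : ∀ a, supp a ≤ mul a (star a)
  le_supp_mul : ∀ a, a ≤ mul (supp a) a
  supp_stable : ∀ b a, b ≤ e → supp (mul b a) = mul b (supp a)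
  sSup_PU : sSup {s | mul s (star s) ≤ e ∧ mul (star s) s ≤ e} = ⊤

/-- A left module over a quantale: a complete lattice with a unital associative
action preserving arbitrary joins in each variable. -/
structure QuantaleModule {Q : Type*} [CompleteLattice Q] (Qs : Quantale' Q)
    (X : Type*) [CompleteLattice X] where
  act : Q → X → X
  act_mul : ∀ a b x, act (Qs.mul a b) x = act a (act b x)
  act_e : ∀ x, act Qs.e x = x
  sSup_act : ∀ (S : Set Q) (x : X), act (sSup S) x = ⨆ a ∈ S, act a x
  act_sSup : ∀ (a : Q) (S : Set X), act a (sSup S) = ⨆ x ∈ S, act a x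

/-- A pre-Hilbert module over a quantale. -/
structure PreHilbertModule {Q : Type*} [CompleteLattice Q] (Qs : Quantale' Q)
    (X : Type*) [CompleteLattice X] extends QuantaleModule Qs X where
  inner : X → X → Q
  inner_act : ∀ a x y, inner (act a x) y = Qs.mul a (inner x y)
  sSup_inner : ∀ (S : Set X) (y : X), inner (sSup S) y = ⨆ x ∈ S, inner x y
  inner_star : ∀ x y, inner x y = Qs.star (inner y x)

namespace PreHilbertModule

variable {Q X : Type*} [CompleteLattice Q] [CompleteLattice X] {Qs : Quantale' Q}

/-- A Hilbert section: `⟨x,s⟩s ≤ x` for all `x`. -/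
def IsHilbertSection (H : PreHilbertModule Qs X) (s : X) : Prop :=
  ∀ x, H.act (H.inner x s) s ≤ x

/-- A regular element: `⟨s,s⟩s = s`. -/
def IsRegularSection (H : PreHilbertModule Qs X) (s : X) : Prop :=
  H.act (H.inner s s) s = s

/-- A Hilbert basis: `x = ⋁_{t ∈ S} ⟨x,t⟩t` for all `x`. -/
def IsHilbertBasis (H : PreHilbertModule Qs X) (S : Set X) : Prop :=
  ∀ x, x = ⨆ t ∈ S, H.act (H.inner x t) t

/-- Non-degeneracy of the inner product. -/
def Nondegenerate (H : PreHilbertModule Qs X) : Prop :=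
  ∀ x y, (∀ z, H.inner x z = H.inner y z) → x = y

end PreHilbertModule

/-- A `Q`-locale over an inverse quantal frame: a module which is a frame and
satisfies the anchor condition. -/
structure QLocale {Q : Type*} [Order.Frame Q] (Qf : InverseQuantalFrame Q)
    (X : Type*) [Order.Frame X] extends QuantaleModule Qf.toQuantale X where
  anchor : ∀ b x, b ≤ Qf.e → act b x = act b ⊤ ⊓ x

/-- A `Q`-sheaf over an inverse quantal frame: a pre-Hilbert module which is a
frame, satisfies the anchor condition, and has a Hilbert basis. -/
structure QSheaf {Q : Type*} [Order.Frame Q] (Qf : InverseQuantalFrame Q)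
    (X : Type*) [Order.Frame X] extends PreHilbertModule Qf.toQuantale X where
  anchor : ∀ b x, b ≤ Qf.e → act b x = act b ⊤ ⊓ x
  hasBasis : ∃ S : Set X, ∀ x, x = ⨆ t ∈ S, act (inner x t) t

namespace QSheaf

variable {Q X : Type*} [Order.Frame Q] [Order.Frame X] {Qf : InverseQuantalFrame Q}

/-- The support `ς_X(x) = ⟨x,x⟩ ∧ e` of a `Q`-sheaf. -/
def sppX (H : QSheaf Qf X) (x : X) : Q := H.inner x x ⊓ Qf.e

/-- A local section: `ς_X(x)s = x` for all `x ≤ s`. -/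
def IsLocalSection (H : QSheaf Qf X) (s : X) : Prop :=
  ∀ x ≤ s, H.act (H.sppX x) s = x

/-- A principal section: a local section with `⟨s,s⟩ ≤ e`. -/
def IsPrincipalSection (H : QSheaf Qf X) (s : X) : Prop :=
  H.IsLocalSection s ∧ H.inner s s ≤ Qf.e

/-- A right local section: `x = s ∧ 1_Q·x` for all `x ≤ s`. -/
def IsRightLocalSection (H : QSheaf Qf X) (s : X) : Prop :=
  ∀ x ≤ s, x = s ⊓ H.act ⊤ x

/-- A local bisection: simultaneously a local section and a right local section. -/
def IsBisection (H : QSheaf Qf X) (s : X) : Prop :=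
  H.IsLocalSection s ∧ H.IsRightLocalSection s

end QSheaf

/-!
Hilbert sections (`⟨x,s⟩s ≤ x` for all `x`) and local sections coincide. One direction uses
`ς(x)x = x`. For the other, if `s` is a local section and `z ≤ s`, then `z = ς(z)s` with `ς(z)`
a self-adjoint idempotent, so `⟨y,s⟩z = ⟨y,z⟩z`; since the Hilbert sections join to `1_X`
(because `1_Q` is a join of partial units), `s` is a join of Hilbert sections `z ≤ s`, whence
`⟨y,s⟩s ≤ y`.

In a bisheaf every `x` is therefore the join of the local bisections `p ≤ x` (meets of `x` with
a Hilbert section and a right local section). For each of them `p = ς(p)p ≤ ⟨x,p⟩p` and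
`p ≤ p ∧ 1_Q·(p ∧ x)`, while conversely `⟨x,s⟩s ≤ x` and `s ∧ 1_Q·(s ∧ x) = s ∧ x` for every
local bisection `s`.
-/

namespace Quantale'

variable {Q : Type*} [CompleteLattice Q] (Qs : Quantale' Q)

theorem mul_le_mul {a b c d : Q} (hab : a ≤ b) (hcd : c ≤ d) : Qs.mul a c ≤ Qs.mul b d := by
  have hl := Qs.sSup_mul {a, b} c
  have hr := Qs.mul_sSup b {c, d}
  simp only [sSup_pair, sup_eq_right.mpr hab, sup_eq_right.mpr hcd, iSup_insert,
    iSup_singleton] at hl hr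
  calc Qs.mul a c ≤ Qs.mul b c := hl ▸ le_sup_left
    _ ≤ Qs.mul b d := hr ▸ le_sup_left

theorem star_mono {a b : Q} (hab : a ≤ b) : Qs.star a ≤ Qs.star b := by
  have h := Qs.star_sSup {a, b}
  simp only [sSup_pair, sup_eq_right.mpr hab, iSup_insert, iSup_singleton] at h
  exact h ▸ le_sup_left

theorem star_e : Qs.star Qs.e = Qs.e := by
  simpa only [Qs.mul_e, Qs.star_star] using (Qs.star_mul (Qs.star Qs.e) Qs.e).symm

end Quantale'

namespace InverseQuantalFrame

variable {Q : Type*} [Order.Frame Q] (Qf : InverseQuantalFrame Q)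

theorem le_supp_of_le_e {b : Q} (hb : b ≤ Qf.e) : b ≤ Qf.supp b :=
  calc b ≤ Qf.mul (Qf.supp b) b := Qf.le_supp_mul b
    _ ≤ Qf.mul (Qf.supp b) Qf.e := Qf.mul_le_mul le_rfl hb
    _ = Qf.supp b := Qf.mul_e _

theorem le_mul_star_of_le_e {b : Q} (hb : b ≤ Qf.e) : b ≤ Qf.mul b (Qf.star b) :=
  (Qf.le_supp_of_le_e hb).trans (Qf.supp_le_mul_star b)

theorem star_eq_self_of_le_e {b : Q} (hb : b ≤ Qf.e) : Qf.star b = b := by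
  have hb' : Qf.star b ≤ Qf.e := Qf.star_e ▸ Qf.star_mono hb
  refine le_antisymm ?_ ?_
  · calc Qf.star b ≤ Qf.mul (Qf.star b) (Qf.star (Qf.star b)) := Qf.le_mul_star_of_le_e hb'
      _ ≤ Qf.mul Qf.e b := Qf.mul_le_mul hb' (Qf.star_star b).le
      _ = b := Qf.e_mul b
  · calc b ≤ Qf.mul b (Qf.star b) := Qf.le_mul_star_of_le_e hb
      _ ≤ Qf.mul Qf.e (Qf.star b) := Qf.mul_le_mul hb le_rfl
      _ = Qf.star b := Qf.e_mul _

theorem mul_self_of_le_e {b : Q} (hb : b ≤ Qf.e) : Qf.mul b b = b := by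
  refine le_antisymm ((Qf.mul_le_mul le_rfl hb).trans_eq (Qf.mul_e b)) ?_
  calc b ≤ Qf.mul b (Qf.star b) := Qf.le_mul_star_of_le_e hb
    _ = Qf.mul b b := by rw [Qf.star_eq_self_of_le_e hb]

end InverseQuantalFrame

namespace QuantaleModule

variable {Q X : Type*} [CompleteLattice Q] [CompleteLattice X] {Qs : Quantale' Q}
  (M : QuantaleModule Qs X)

theorem act_mono {a b : Q} {x y : X} (hab : a ≤ b) (hxy : x ≤ y) : M.act a x ≤ M.act b y := by
  have hl := M.sSup_act {a, b} x
  have hr := M.act_sSup b {x, y}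
  simp only [sSup_pair, sup_eq_right.mpr hab, sup_eq_right.mpr hxy, iSup_insert,
    iSup_singleton] at hl hr
  calc M.act a x ≤ M.act b x := hl ▸ le_sup_left
    _ ≤ M.act b y := hr ▸ le_sup_left

theorem act_iSup {ι : Sort*} (a : Q) (f : ι → X) : M.act a (⨆ i, f i) = ⨆ i, M.act a (f i) := by
  rw [iSup, M.act_sSup, iSup_range]

theorem act_le_of_le_e {b : Q} (hb : b ≤ Qs.e) (x : X) : M.act b x ≤ x :=
  (M.act_mono hb le_rfl).trans_eq (M.act_e x)

theorem le_act_top (x : X) : x ≤ M.act ⊤ x :=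
  (M.act_e x).symm.trans_le (M.act_mono le_top le_rfl)

end QuantaleModule

namespace PreHilbertModule

variable {Q X : Type*} [CompleteLattice Q] [CompleteLattice X] {Qs : Quantale' Q}
  (H : PreHilbertModule Qs X)

theorem inner_act_right (a : Q) (x y : X) :
    H.inner x (H.act a y) = Qs.mul (H.inner x y) (Qs.star a) := by
  rw [H.inner_star, H.inner_act, Qs.star_mul, ← H.inner_star]

theorem inner_mono {x x' y y' : X} (hx : x ≤ x') (hy : y ≤ y') :
    H.inner x y ≤ H.inner x' y' := by
  have hl := H.sSup_inner {x, x'} y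
  have hr := H.sSup_inner {y, y'} x'
  simp only [sSup_pair, sup_eq_right.mpr hx, sup_eq_right.mpr hy, iSup_insert,
    iSup_singleton] at hl hr
  calc H.inner x y ≤ H.inner x' y := hl ▸ le_sup_left
    _ = Qs.star (H.inner y x') := H.inner_star _ _
    _ ≤ Qs.star (H.inner y' x') := Qs.star_mono (hr ▸ le_sup_left)
    _ = H.inner x' y' := (H.inner_star _ _).symm

variable {H}

theorem IsHilbertSection.mono {s t : X} (hs : H.IsHilbertSection s) (hts : t ≤ s) :
    H.IsHilbertSection t :=
  fun x => (H.act_mono (H.inner_mono le_rfl hts) hts).trans (hs x)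

theorem IsHilbertSection.act {s : X} (hs : H.IsHilbertSection s) {u : Q}
    (hu : Qs.mul (Qs.star u) u ≤ Qs.e) : H.IsHilbertSection (H.act u s) := by
  intro x
  calc H.act (H.inner x (H.act u s)) (H.act u s)
      = H.act (Qs.mul (H.inner x s) (Qs.mul (Qs.star u) u)) s := by
        rw [H.inner_act_right, ← H.act_mul, Qs.mul_assoc]
    _ ≤ H.act (Qs.mul (H.inner x s) Qs.e) s := H.act_mono (Qs.mul_le_mul le_rfl hu) le_rfl
    _ ≤ x := (Qs.mul_e _).symm ▸ hs x

theorem IsHilbertBasis.isHilbertSection {S : Set X} (hS : H.IsHilbertBasis S) {s : X}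
    (hs : s ∈ S) : H.IsHilbertSection s := fun x =>
  (le_iSup₂ (f := fun t _ => H.act (H.inner x t) t) s hs).trans_eq (hS x).symm

theorem IsHilbertBasis.mono {S T : Set X} (hS : H.IsHilbertBasis S) (hST : S ⊆ T)
    (hT : ∀ t ∈ T, H.IsHilbertSection t) : H.IsHilbertBasis T := fun x =>
  le_antisymm ((hS x).le.trans (biSup_mono hST)) (iSup₂_le fun t ht => hT t ht x)

end PreHilbertModule

namespace QSheaf

variable {Q X : Type*} [Order.Frame Q] [Order.Frame X] {Qf : InverseQuantalFrame Q}
  (H : QSheaf Qf X)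

theorem isHilbertBasis_setOf_isHilbertSection :
    H.IsHilbertBasis {t | H.IsHilbertSection t} := by
  obtain ⟨S, hS⟩ := H.hasBasis
  have hS : H.IsHilbertBasis S := hS
  exact hS.mono (fun t ht => hS.isHilbertSection ht) fun _ ht => ht

theorem supp_inner_le_sppX {t : X} (ht : H.IsHilbertSection t) (x : X) :
    Qf.supp (H.inner x t) ≤ H.sppX x := by
  refine le_inf ?_ (Qf.supp_le_e _)
  calc Qf.supp (H.inner x t) ≤ Qf.mul (H.inner x t) (Qf.star (H.inner x t)) :=
        Qf.supp_le_mul_star _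
    _ = H.inner (H.act (H.inner x t) t) x := by rw [H.inner_act, ← H.inner_star]
    _ ≤ H.inner x x := H.inner_mono (ht x) le_rfl

theorem act_sppX_self (x : X) : H.act (H.sppX x) x = x := by
  refine le_antisymm (H.act_le_of_le_e inf_le_right x) ?_
  conv_lhs => rw [H.isHilbertBasis_setOf_isHilbertSection x]
  refine iSup₂_le fun t ht => ?_
  calc H.act (H.inner x t) t
      ≤ H.act (Qf.mul (H.sppX x) (H.inner x t)) t :=
        H.act_mono ((Qf.le_supp_mul _).trans (Qf.mul_le_mul (H.supp_inner_le_sppX ht x) le_rfl))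
          le_rfl
    _ = H.act (H.sppX x) (H.act (H.inner x t) t) := H.act_mul _ _ _
    _ ≤ H.act (H.sppX x) x := H.act_mono le_rfl (ht x)

theorem le_act_inner {x y : X} (hyx : y ≤ x) : y ≤ H.act (H.inner x y) y :=
  calc y = H.act (H.sppX y) y := (H.act_sppX_self y).symm
    _ ≤ H.act (H.inner x y) y := H.act_mono (inf_le_left.trans (H.inner_mono hyx le_rfl)) le_rfl

theorem sSup_setOf_isHilbertSection : sSup {t | H.IsHilbertSection t} = ⊤ := by
  refine top_le_iff.mp ?_
  conv_lhs => rw [H.isHilbertBasis_setOf_isHilbertSection ⊤]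
  refine iSup₂_le fun t ht => ?_
  calc H.act (H.inner ⊤ t) t ≤ H.act ⊤ t := H.act_mono le_top le_rfl
    _ = ⨆ u ∈ Qf.PU, H.act u t := by rw [← Qf.sSup_PU, H.sSup_act]; rfl
    _ ≤ sSup {t | H.IsHilbertSection t} := iSup₂_le fun u hu => le_sSup (ht.act hu.2)

theorem eq_iSup_inf_isHilbertSection (x : X) :
    x = ⨆ t ∈ {t | H.IsHilbertSection t}, x ⊓ t := by
  rw [← inf_sSup_eq, H.sSup_setOf_isHilbertSection, inf_top_eq]

variable {H}

theorem _root_.PreHilbertModule.IsHilbertSection.isLocalSection {s : X}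
    (hs : H.IsHilbertSection s) : H.IsLocalSection s := by
  intro x hxs
  refine le_antisymm ?_ ?_
  · exact (H.act_mono (inf_le_left.trans (H.inner_mono le_rfl hxs)) le_rfl).trans (hs x)
  · calc x = H.act (H.sppX x) x := (H.act_sppX_self x).symm
      _ ≤ H.act (H.sppX x) s := H.act_mono le_rfl hxs

theorem IsLocalSection.act_inner_of_le {s z : X} (hs : H.IsLocalSection s) (hzs : z ≤ s)
    (y : X) : H.act (H.inner y s) z = H.act (H.inner y z) z := by
  have hz : H.sppX z ≤ Qf.e := inf_le_right
  conv_lhs => rw [← hs z hzs, ← Qf.mul_self_of_le_e hz]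
  conv_rhs => rw [← hs z hzs]
  rw [H.inner_act_right, Qf.star_eq_self_of_le_e hz, ← H.act_mul, ← H.act_mul, Qf.mul_assoc]

theorem IsLocalSection.isHilbertSection {s : X} (hs : H.IsLocalSection s) :
    H.IsHilbertSection s := by
  intro y
  calc H.act (H.inner y s) s
      = H.act (H.inner y s) (⨆ t ∈ {t | H.IsHilbertSection t}, s ⊓ t) :=
        congrArg _ (H.eq_iSup_inf_isHilbertSection s)
    _ = ⨆ t ∈ {t | H.IsHilbertSection t}, H.act (H.inner y (s ⊓ t)) (s ⊓ t) := by
        simp only [H.act_iSup, hs.act_inner_of_le inf_le_left]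
    _ ≤ y := iSup₂_le fun t ht => (ht.mono inf_le_right) y

theorem IsRightLocalSection.mono {s t : X} (hs : H.IsRightLocalSection s) (hts : t ≤ s) :
    H.IsRightLocalSection t := by
  intro x hxt
  refine le_antisymm (le_inf hxt (H.le_act_top x)) ?_
  calc t ⊓ H.act ⊤ x ≤ s ⊓ H.act ⊤ x := inf_le_inf_right _ hts
    _ = x := (hs x (hxt.trans hts)).symm

variable (H)

theorem sSup_setOf_isBisection_le (hbi : sSup {s : X | H.IsRightLocalSection s} = ⊤) (x : X) :
    sSup {p | H.IsBisection p ∧ p ≤ x} = x := by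
  refine le_antisymm (sSup_le fun p hp => hp.2) ?_
  calc x = x ⊓ (sSup {t | H.IsHilbertSection t} ⊓ sSup {s | H.IsRightLocalSection s}) := by
        rw [H.sSup_setOf_isHilbertSection, hbi, inf_idem, inf_top_eq]
    _ = ⨆ p ∈ {t | H.IsHilbertSection t} ×ˢ {s | H.IsRightLocalSection s},
          x ⊓ (p.1 ⊓ p.2) := by
        rw [sSup_inf_sSup, inf_iSup₂_eq]
    _ ≤ sSup {p | H.IsBisection p ∧ p ≤ x} := iSup₂_le fun p hp =>
        le_sSup ⟨⟨(hp.1.mono (inf_le_right.trans inf_le_left)).isLocalSection,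
          hp.2.mono (inf_le_right.trans inf_le_right)⟩, inf_le_left⟩

theorem isHilbertBasis_setOf_isBisection (hbi : sSup {s : X | H.IsRightLocalSection s} = ⊤) :
    H.IsHilbertBasis {t | H.IsBisection t} := by
  intro x
  refine le_antisymm ?_ (iSup₂_le fun p hp => hp.1.isHilbertSection x)
  conv_lhs => rw [← H.sSup_setOf_isBisection_le hbi x]
  exact sSup_le fun p hp =>
    (H.le_act_inner hp.2).trans (le_iSup₂ (f := fun t _ => H.act (H.inner x t) t) p hp.1)

theorem iSup_isBisection_inf_act_top_inf (hbi : sSup {s : X | H.IsRightLocalSection s} = ⊤)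
    (x : X) : ⨆ s ∈ {t | H.IsBisection t}, s ⊓ H.act ⊤ (s ⊓ x) = x := by
  refine le_antisymm (iSup₂_le fun s hs => ?_) ?_
  · rw [← hs.2 (s ⊓ x) inf_le_left]
    exact inf_le_right
  · conv_lhs => rw [← H.sSup_setOf_isBisection_le hbi x]
    refine sSup_le fun p hp => le_iSup₂_of_le p hp.1 ?_
    rw [inf_eq_left.mpr hp.2]
    exact le_inf le_rfl (H.le_act_top p)

end QSheaf

/-- In a `Q`-bisheaf, the set of local bisections is a Hilbert
basis with respect to both sheaf structures. -/
theorem stmt16 {Q X : Type*} [Order.Frame Q] [Order.Frame X]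
    (Qf : InverseQuantalFrame Q) (H : QSheaf Qf X)
    (hbisheaf : sSup {s : X | H.IsRightLocalSection s} = ⊤) :
    (∀ x : X, x = ⨆ s ∈ {t : X | H.IsBisection t}, H.act (H.inner x s) s) ∧
    (∀ x : X, x = ⨆ s ∈ {t : X | H.IsBisection t}, s ⊓ H.act ⊤ (s ⊓ x)) :=
  ⟨H.isHilbertBasis_setOf_isBisection hbisheaf,
    fun x => (H.iSup_isBisection_inf_act_top_inf hbisheaf x).symm⟩
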